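/- arXiv:1512.07204 — 3 statements merged into one kernel-verified Lean document; each statement's English description precedes it below -/
import Mathlib

section
/- Let F be a field of characteristic ≠ 2, let S = [[a, b/2], [b/2, c]] with d = b² - 4ac ≠ 0 and D = d/4 a non-square in F. Then the map sending the matrix [[x + y·b/2, y·c], [-y·a, x - y·b/2]] to x + y·√D is a ring isomorphism from the algebra A_S = {g ∈ M₂(F) : ᵗg S g = det(g) S} onto the quadratic field extension K = F(√D). In particular, every nonzero element of A_S is invertible. -/
/-!
Put `β = b / 2`, so that `D = β² - ac`. The traceless matrix `J = [[β, c], [-a, -β]]` satisfies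
`J² = D`, so `√D ↦ J` defines an `F`-algebra map `K → M₂(F)` whose image is `F + F J`, the
matrices of the stated shape. Conversely, for `g = [[p, q], [r, s]]` the equation
`ᵗg S g = det(g) S` consists of three quadratic equations. If `det g ≠ 0`, combining them cancels
`det g` and leaves the linear relations `a (p - s) + 2 β r = 0` and `a q + c r = 0`, which say
exactly that `g ∈ F + F J`. If `det g = 0`, both columns of `g` are isotropic for `S`, hence zero
since `D` is not a square. The same dichotomy shows that nonzero elements of `A_S` are invertible.
-/

open Matrix Polynomial

namespace AdjoinRoot

variable {R B : Type*} [CommRing R] [Ring B] [Algebra R B]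

/-- Unlike `AdjoinRoot.liftAlgHom`, this allows a noncommutative target. -/
noncomputable def liftAeval (f : R[X]) (x : B) (hx : aeval x f = 0) : AdjoinRoot f →ₐ[R] B :=
  Ideal.Quotient.liftₐ _ (aeval x) fun g hg => by
    obtain ⟨h, rfl⟩ := Ideal.mem_span_singleton.1 hg
    rw [map_mul, hx, zero_mul]

theorem liftAeval_root (f : R[X]) (x : B) (hx : aeval x f = 0) :
    liftAeval f x hx (root f) = x :=
  aeval_X x

theorem exists_eq_of_add_of_mul_root [Nontrivial R] {g : R[X]} (hg : g.Monic)
    (hdeg : g.natDegree = 2) (z : AdjoinRoot g) : ∃ x y : R, z = of g x + of g y * root g := by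
  induction z using AdjoinRoot.induction_on with
  | ih f =>
    have hlin : (f %ₘ g).natDegree ≤ 1 := by
      have := natDegree_modByMonic_lt f hg (by rintro rfl; simp at hdeg)
      omega
    refine ⟨(f %ₘ g).coeff 0, (f %ₘ g).coeff 1, ?_⟩
    conv_lhs => rw [← modByMonic_add_div f g, map_add, map_mul, mk_self, zero_mul, add_zero,
      eq_X_add_C_of_natDegree_le_one hlin]
    rw [map_add, map_mul, mk_X, mk_C, mk_C, add_comm]

end AdjoinRoot

section BinaryForm

variable {F : Type*} [Field F] {a β c : F}

theorem ne_zero_of_forall_sq_ne (hD : ∀ x : F, x ^ 2 ≠ β ^ 2 - a * c) : a ≠ 0 := by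
  rintro rfl
  exact hD β (by ring)

theorem eq_zero_of_binaryForm_eq_zero (hD : ∀ x : F, x ^ 2 ≠ β ^ 2 - a * c) {u v : F}
    (h : a * u ^ 2 + 2 * β * u * v + c * v ^ 2 = 0) : u = 0 ∧ v = 0 := by
  have ha := ne_zero_of_forall_sq_ne hD
  obtain rfl | hv := eq_or_ne v 0
  · simpa [ha] using h
  · refine absurd ?_ (hD ((a * u + β * v) / v))
    rw [div_pow, div_eq_iff (pow_ne_zero 2 hv)]
    linear_combination a * h

theorem transpose_mul_mul_eq_det_smul_iff (p q r s : F) :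
    !![p, q; r, s]ᵀ * !![a, β; β, c] * !![p, q; r, s] =
        (!![p, q; r, s] : Matrix (Fin 2) (Fin 2) F).det • !![a, β; β, c] ↔
      a * p ^ 2 + 2 * β * p * r + c * r ^ 2 = (p * s - q * r) * a ∧
      a * p * q + β * (p * s + q * r) + c * r * s = (p * s - q * r) * β ∧
      a * q ^ 2 + 2 * β * q * s + c * s ^ 2 = (p * s - q * r) * c := by
  rw [← Matrix.ext_iff]
  simp only [Fin.forall_fin_two, det_fin_two, mul_apply, Fin.sum_univ_two, transpose_apply,
    of_apply, cons_val', cons_val_zero, cons_val_one, empty_val', cons_val_fin_one,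
    Matrix.smul_apply, smul_eq_mul]
  exact ⟨fun ⟨⟨h₀₀, h₀₁⟩, _, h₁₁⟩ => ⟨by linear_combination h₀₀, by linear_combination h₀₁,
      by linear_combination h₁₁⟩,
    fun ⟨h₀₀, h₀₁, h₁₁⟩ => ⟨⟨by linear_combination h₀₀, by linear_combination h₀₁⟩,
      by linear_combination h₀₁, by linear_combination h₁₁⟩⟩

theorem eq_zero_of_transpose_mul_mul_eq_det_smul_of_det_eq_zero
    (hD : ∀ x : F, x ^ 2 ≠ β ^ 2 - a * c) {g : Matrix (Fin 2) (Fin 2) F}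
    (hg : gᵀ * !![a, β; β, c] * g = g.det • !![a, β; β, c]) (hdet : g.det = 0) : g = 0 := by
  obtain ⟨p, q, r, s, rfl⟩ : ∃ p q r s, g = !![p, q; r, s] := ⟨_, _, _, _, eta_fin_two g⟩
  rw [det_fin_two_of] at hdet
  obtain ⟨h₀₀, -, h₁₁⟩ := (transpose_mul_mul_eq_det_smul_iff p q r s).1 hg
  obtain ⟨rfl, rfl⟩ := eq_zero_of_binaryForm_eq_zero hD (h₀₀.trans (by rw [hdet, zero_mul]))
  obtain ⟨rfl, rfl⟩ := eq_zero_of_binaryForm_eq_zero hD (h₁₁.trans (by rw [hdet, zero_mul]))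
  exact (eta_fin_two 0).symm

theorem transpose_mul_mul_eq_det_smul_iff_exists (hD : ∀ x : F, x ^ 2 ≠ β ^ 2 - a * c)
    (g : Matrix (Fin 2) (Fin 2) F) :
    gᵀ * !![a, β; β, c] * g = g.det • !![a, β; β, c] ↔
      ∃ x y : F, g = !![x + y * β, y * c; -(y * a), x - y * β] := by
  constructor
  · intro hg
    obtain hdet | hdet := eq_or_ne g.det 0
    · refine ⟨0, 0, ?_⟩
      rw [eq_zero_of_transpose_mul_mul_eq_det_smul_of_det_eq_zero hD hg hdet]
      simpa using (eta_fin_two (0 : Matrix (Fin 2) (Fin 2) F))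
    obtain ⟨p, q, r, s, rfl⟩ : ∃ p q r s, g = !![p, q; r, s] := ⟨_, _, _, _, eta_fin_two g⟩
    rw [det_fin_two_of] at hdet
    obtain ⟨h₀₀, h₀₁, -⟩ := (transpose_mul_mul_eq_det_smul_iff p q r s).1 hg
    have hps : a * (p - s) + 2 * β * r = 0 :=
      mul_left_cancel₀ hdet (by linear_combination s * h₀₀ - r * h₀₁)
    have hqr : a * q + c * r = 0 :=
      mul_left_cancel₀ hdet (by linear_combination p * h₀₁ - q * h₀₀)
    have ha := ne_zero_of_forall_sq_ne hD
    refine ⟨p + r * β / a, -r / a, ?_⟩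
    have e₀₀ : p + r * β / a + -r / a * β = p := by ring
    have e₀₁ : -r / a * c = q := by field_simp; linear_combination -hqr
    have e₁₀ : -(-r / a * a) = r := by field_simp
    have e₁₁ : p + r * β / a - -r / a * β = s := by field_simp; linear_combination hps
    rw [e₀₀, e₀₁, e₁₀, e₁₁]
  · rintro ⟨x, y, rfl⟩
    rw [transpose_mul_mul_eq_det_smul_iff]
    refine ⟨by ring, by ring, by ring⟩

theorem isUnit_of_transpose_mul_mul_eq_det_smul (hD : ∀ x : F, x ^ 2 ≠ β ^ 2 - a * c)
    {g : Matrix (Fin 2) (Fin 2) F} (hg : gᵀ * !![a, β; β, c] * g = g.det • !![a, β; β, c])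
    (hg0 : g ≠ 0) : IsUnit g :=
  (isUnit_iff_isUnit_det g).2 <| isUnit_iff_ne_zero.2 fun hdet =>
    hg0 (eq_zero_of_transpose_mul_mul_eq_det_smul_of_det_eq_zero hD hg hdet)

end BinaryForm

section AdjoinSqrtToMatrix

variable {F : Type*} [Field F]

theorem traceless_sq_eq_algebraMap (a β c : F) :
    !![β, c; -a, -β] ^ 2 = algebraMap F (Matrix (Fin 2) (Fin 2) F) (β ^ 2 - a * c) := by
  rw [sq, mul_fin_two, Algebra.algebraMap_eq_smul_one, one_fin_two, smul_of]
  simp only [smul_cons, smul_empty, smul_eq_mul]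
  congr 1
  ring_nf

noncomputable def adjoinSqrtToMatrix (a β c : F) :
    AdjoinRoot (X ^ 2 - C (β ^ 2 - a * c)) →ₐ[F] Matrix (Fin 2) (Fin 2) F :=
  AdjoinRoot.liftAeval _ !![β, c; -a, -β] <| by
    rw [map_sub, aeval_X_pow, aeval_C, traceless_sq_eq_algebraMap, sub_self]

theorem adjoinSqrtToMatrix_of_add_of_mul_root (a β c x y : F) :
    adjoinSqrtToMatrix a β c (AdjoinRoot.of _ x + AdjoinRoot.of _ y * AdjoinRoot.root _) =
      !![x + y * β, y * c; -(y * a), x - y * β] := by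
  rw [← AdjoinRoot.algebraMap_eq, map_add, map_mul, AlgHom.commutes, AlgHom.commutes,
    adjoinSqrtToMatrix, AdjoinRoot.liftAeval_root, Algebra.algebraMap_eq_smul_one,
    Algebra.algebraMap_eq_smul_one, smul_mul_assoc, one_mul, one_fin_two, smul_of, smul_of,
    of_add_of]
  simp only [smul_cons, smul_empty, smul_eq_mul, cons_add_cons, empty_add_empty]
  congr 1
  ring_nf

theorem range_adjoinSqrtToMatrix {a β c : F} (hD : ∀ x : F, x ^ 2 ≠ β ^ 2 - a * c) :
    Set.range (adjoinSqrtToMatrix a β c) =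
      {g | gᵀ * !![a, β; β, c] * g = g.det • !![a, β; β, c]} := by
  ext g
  rw [Set.mem_ofPred_eq, transpose_mul_mul_eq_det_smul_iff_exists hD]
  constructor
  · rintro ⟨z, rfl⟩
    obtain ⟨x, y, rfl⟩ := AdjoinRoot.exists_eq_of_add_of_mul_root
      (monic_X_pow_sub_C _ two_ne_zero) natDegree_X_pow_sub_C z
    exact ⟨x, y, adjoinSqrtToMatrix_of_add_of_mul_root a β c x y⟩
  · rintro ⟨x, y, rfl⟩
    exact ⟨_, adjoinSqrtToMatrix_of_add_of_mul_root a β c x y⟩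

end AdjoinSqrtToMatrix

theorem stmt2_general {F : Type*} [Field F] (h2 : (2 : F) ≠ 0) (a b c d D : F)
    (hd : d = b ^ 2 - 4 * a * c) (hD : D = d / 4)
    (hDns : ∀ x : F, x ^ 2 ≠ D) :
    ∃ φ : AdjoinRoot (Polynomial.X ^ 2 - Polynomial.C D) →+* Matrix (Fin 2) (Fin 2) F,
      Function.Injective φ ∧
      (∀ x y : F,
        φ (AdjoinRoot.of (Polynomial.X ^ 2 - Polynomial.C D) x +
            AdjoinRoot.of (Polynomial.X ^ 2 - Polynomial.C D) y *
              AdjoinRoot.root (Polynomial.X ^ 2 - Polynomial.C D)) =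
          !![x + y * b / 2, y * c; -(y * a), x - y * b / 2]) ∧
      Set.range φ =
        {g : Matrix (Fin 2) (Fin 2) F |
          gᵀ * !![a, b / 2; b / 2, c] * g = g.det • !![a, b / 2; b / 2, c]} ∧
      (∀ g : Matrix (Fin 2) (Fin 2) F,
        gᵀ * !![a, b / 2; b / 2, c] * g = g.det • !![a, b / 2; b / 2, c] →
        g ≠ 0 → IsUnit g) := by
  obtain rfl : D = (b / 2) ^ 2 - a * c := by
    have h4 : (4 : F) ≠ 0 := by simpa [← sq, show (4 : F) = 2 ^ 2 by norm_num] using h2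
    rw [hD, hd]
    field_simp
    ring
  have : Fact (Irreducible (X ^ 2 - C ((b / 2) ^ 2 - a * c))) :=
    ⟨X_pow_sub_C_irreducible_of_prime Nat.prime_two hDns⟩
  refine ⟨adjoinSqrtToMatrix a (b / 2) c, RingHom.injective _, fun x y => ?_,
    range_adjoinSqrtToMatrix hDns, fun g => isUnit_of_transpose_mul_mul_eq_det_smul hDns⟩
  simp only [mul_div_assoc]
  exact adjoinSqrtToMatrix_of_add_of_mul_root a (b / 2) c x y

theorem stmt2 {F : Type*} [Field F] (h2 : (2 : F) ≠ 0) (a b c d D : F)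
    (hd : d = b ^ 2 - 4 * a * c) (hd0 : d ≠ 0) (hD : D = d / 4)
    (hDns : ∀ x : F, x ^ 2 ≠ D) :
    ∃ φ : AdjoinRoot (Polynomial.X ^ 2 - Polynomial.C D) →+* Matrix (Fin 2) (Fin 2) F,
      Function.Injective φ ∧
      (∀ x y : F,
        φ (AdjoinRoot.of (Polynomial.X ^ 2 - Polynomial.C D) x +
            AdjoinRoot.of (Polynomial.X ^ 2 - Polynomial.C D) y *
              AdjoinRoot.root (Polynomial.X ^ 2 - Polynomial.C D)) =
          !![x + y * b / 2, y * c; -(y * a), x - y * b / 2]) ∧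
      Set.range φ =
        {g : Matrix (Fin 2) (Fin 2) F |
          gᵀ * !![a, b / 2; b / 2, c] * g = g.det • !![a, b / 2; b / 2, c]} ∧
      (∀ g : Matrix (Fin 2) (Fin 2) F,
        gᵀ * !![a, b / 2; b / 2, c] * g = g.det • !![a, b / 2; b / 2, c] →
        g ≠ 0 → IsUnit g) :=
  stmt2_general h2 a b c d D hd hD hDns
end

section
/- Let F be a field and let S be an invertible symmetric 2×2 matrix over F. For g ∈ GL(2, F) with ᵗg S g = det(g) S, the 4×4 block matrix ι(g) = [[g, 0], [0, det(g)·ᵗg⁻¹]] lies in GSp(4, F) with similitude factor λ(ι(g)) = det(g), and ι : T_S(F) → GSp(4, F) is an injective group homomorphism. -/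
open Matrix

/-
The similitude identity is a block computation: with `J = [[0, 1], [-1, 0]]`, one gets
`ι(g)ᵀ J ι(g) = [[0, gᵀ (c • g⁻ᵀ)], [-(c • g⁻¹) g, 0]] = c • J` for `ι(g) = [[g, 0], [0, c • g⁻ᵀ]]`,
as soon as `g` is invertible. Multiplicativity of `ι` with `c = det g` follows from that of
`det` and the reversal of products under inversion and transposition, and `ι(g)` recovers `g`
as its upper left block.
-/

namespace Matrix

variable {n R : Type*} [Fintype n] [DecidableEq n] [CommRing R]

theorem fromBlocks_diagonal_transpose_mul_symplectic_mul {g : Matrix n n R} (hg : IsUnit g.det)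
    (c : R) :
    (fromBlocks g 0 0 (c • (g⁻¹)ᵀ))ᵀ * fromBlocks 0 1 (-1) 0 * fromBlocks g 0 0 (c • (g⁻¹)ᵀ) =
      c • (fromBlocks 0 1 (-1) 0 : Matrix (n ⊕ n) (n ⊕ n) R) := by
  have hinv : g⁻¹ * g = 1 := nonsing_inv_mul g hg
  simp only [fromBlocks_transpose, fromBlocks_multiply, fromBlocks_smul, transpose_smul,
    transpose_transpose, transpose_zero, Matrix.mul_zero, Matrix.zero_mul, Matrix.mul_one,
    Matrix.mul_neg, Matrix.neg_mul, Matrix.mul_smul, Matrix.smul_mul, hinv, add_zero, zero_add,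
    neg_zero, smul_zero, smul_neg, ← transpose_mul, transpose_one]

noncomputable def gspEmbedding (g : Matrix n n R) : Matrix (n ⊕ n) (n ⊕ n) R :=
  fromBlocks g 0 0 (g.det • (g⁻¹)ᵀ)

theorem gspEmbedding_transpose_mul_symplectic_mul {g : Matrix n n R} (hg : IsUnit g.det) :
    (gspEmbedding g)ᵀ * fromBlocks 0 1 (-1) 0 * gspEmbedding g =
      g.det • (fromBlocks 0 1 (-1) 0 : Matrix (n ⊕ n) (n ⊕ n) R) :=
  fromBlocks_diagonal_transpose_mul_symplectic_mul hg g.det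

theorem gspEmbedding_mul (g h : Matrix n n R) :
    gspEmbedding (g * h) = gspEmbedding g * gspEmbedding h := by
  have hlower : (g * h).det • ((g * h)⁻¹)ᵀ = g.det • (g⁻¹)ᵀ * h.det • (h⁻¹)ᵀ := by
    rw [det_mul, mul_inv_rev, transpose_mul, Matrix.mul_smul, Matrix.smul_mul, smul_smul,
      mul_comm]
  simp only [gspEmbedding, fromBlocks_multiply, Matrix.mul_zero, Matrix.zero_mul, add_zero,
    zero_add, hlower]

theorem gspEmbedding_injective : Function.Injective (gspEmbedding : Matrix n n R → _) :=
  fun _ _ he => (fromBlocks_inj.mp he).1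

end Matrix

theorem stmt3_general {F : Type*} [Field F] (S : Matrix (Fin 2) (Fin 2) F)
    (J : Matrix (Fin 2 ⊕ Fin 2) (Fin 2 ⊕ Fin 2) F)
    (hJ : J = Matrix.fromBlocks 0 1 (-1) 0)
    (ι : Matrix (Fin 2) (Fin 2) F → Matrix (Fin 2 ⊕ Fin 2) (Fin 2 ⊕ Fin 2) F)
    (hι : ∀ g, ι g = Matrix.fromBlocks g 0 0 (g.det • (g⁻¹)ᵀ)) :
    (∀ g : Matrix (Fin 2) (Fin 2) F, IsUnit g.det → gᵀ * S * g = g.det • S →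
        (ι g)ᵀ * J * ι g = g.det • J ∧ IsUnit g.det) ∧
    (∀ g h : Matrix (Fin 2) (Fin 2) F, IsUnit g.det → IsUnit h.det →
        gᵀ * S * g = g.det • S → hᵀ * S * h = h.det • S →
        ι (g * h) = ι g * ι h) ∧
    (∀ g h : Matrix (Fin 2) (Fin 2) F, IsUnit g.det → IsUnit h.det →
        gᵀ * S * g = g.det • S → hᵀ * S * h = h.det • S →
        ι g = ι h → g = h) := by
  obtain rfl : ι = gspEmbedding := funext hι
  subst hJ
  exact ⟨fun g hg _ => ⟨gspEmbedding_transpose_mul_symplectic_mul hg, hg⟩,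
    fun g h _ _ _ _ => gspEmbedding_mul g h,
    fun g h _ _ _ _ he => gspEmbedding_injective he⟩

theorem stmt3 {F : Type*} [Field F] (S : Matrix (Fin 2) (Fin 2) F)
    (hsym : Sᵀ = S) (hdet : S.det ≠ 0)
    (J : Matrix (Fin 2 ⊕ Fin 2) (Fin 2 ⊕ Fin 2) F)
    (hJ : J = Matrix.fromBlocks 0 1 (-1) 0)
    (ι : Matrix (Fin 2) (Fin 2) F → Matrix (Fin 2 ⊕ Fin 2) (Fin 2 ⊕ Fin 2) F)
    (hι : ∀ g, ι g = Matrix.fromBlocks g 0 0 (g.det • (g⁻¹)ᵀ)) :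
    (∀ g : Matrix (Fin 2) (Fin 2) F, IsUnit g.det → gᵀ * S * g = g.det • S →
        (ι g)ᵀ * J * ι g = g.det • J ∧ IsUnit g.det) ∧
    (∀ g h : Matrix (Fin 2) (Fin 2) F, IsUnit g.det → IsUnit h.det →
        gᵀ * S * g = g.det • S → hᵀ * S * h = h.det • S →
        ι (g * h) = ι g * ι h) ∧
    (∀ g h : Matrix (Fin 2) (Fin 2) F, IsUnit g.det → IsUnit h.det →
        gᵀ * S * g = g.det • S → hᵀ * S * h = h.det • S →
        ι g = ι h → g = h) :=
  stmt3_general S J hJ ι hι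
end

section
/- For all real β > 0, p > 0, and real ν > 1, the integral over x ∈ ℝ of (β - i x)^{-ν} e^{-i p x} dx equals 2π p^{ν-1} e^{-β p} / Γ(ν), where (β - ix)^{-ν} is defined using the principal branch of the logarithm. -/
/-!
Let `f(t) = t ^ (ν - 1) e ^ (-β t)` for `t > 0` and `f(t) = 0` otherwise. For real `z > 0`,
`∫₀^∞ t ^ (ν - 1) e ^ (-z t) dt = Γ(ν) z ^ (-ν)` is Euler's integral; both sides are holomorphic
on `Re z > 0`, so the identity persists there, and hence `𝓕 f ξ = Γ(ν) (β + 2πiξ) ^ (-ν)`.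
For `ν > 1` this transform is integrable, so Fourier inversion at `p` recovers `f(p)`, and the
substitution `x = -2πξ` turns the inversion integral into the integral of the statement.
-/

open MeasureTheory Complex Set Filter FourierTransform ProbabilityTheory
open scoped Real Topology NNReal ENNReal

lemma AnalyticOnNhd.eqOn_re_pos_of_eq_ofReal {f g : ℂ → ℂ}
    (hf : AnalyticOnNhd ℂ f {z | 0 < z.re}) (hg : AnalyticOnNhd ℂ g {z | 0 < z.re})
    (hfg : ∀ r : ℝ, 0 < r → f r = g r) :
    EqOn f g {z | 0 < z.re} := by
  have hofReal : Tendsto ((↑) : ℝ → ℂ) (𝓝[≠] 1) (𝓝[≠] 1) := by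
    rw [tendsto_nhdsWithin_iff]
    exact ⟨tendsto_nhdsWithin_of_tendsto_nhds continuous_ofReal.continuousAt,
      eventually_nhdsWithin_of_forall fun r hr => ofReal_ne_one.mpr hr⟩
  refine hf.eqOn_of_preconnected_of_frequently_eq hg (convex_halfSpace_re_gt 0).isPreconnected
    (z₀ := 1) (by simp) (hofReal.frequently ?_)
  exact ((eventually_gt_nhds one_pos).filter_mono nhdsWithin_le_nhds).frequently.mono hfg

section Laplace

variable {a : ℝ}

/-- The Laplace transform of `t ^ (a - 1)` at `z` is `complexMGF id (gammaWeight a) (-z)`, so its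
holomorphy in `z` comes from that of complex moment generating functions. -/
noncomputable def gammaWeight (a : ℝ) : Measure ℝ :=
  (volume.restrict (Ioi 0)).withDensity fun t => ((t ^ (a - 1)).toNNReal : ℝ≥0∞)

lemma toNNReal_rpow_smul_eq_cpow_mul {t : ℝ} (ht : 0 ≤ t) (w : ℂ) :
    (t ^ (a - 1)).toNNReal • w = (t : ℂ) ^ ((a : ℂ) - 1) * w := by
  rw [NNReal.smul_def, Real.coe_toNNReal _ (Real.rpow_nonneg ht _), real_smul, ofReal_cpow ht]
  push_cast
  rfl

lemma integral_gammaWeight (g : ℝ → ℂ) :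
    ∫ t, g t ∂gammaWeight a = ∫ t in Ioi (0 : ℝ), (t : ℂ) ^ ((a : ℂ) - 1) * g t := by
  rw [gammaWeight, integral_withDensity_eq_integral_smul (by fun_prop)]
  exact setIntegral_congr_fun measurableSet_Ioi fun t (ht : 0 < t) =>
    toNNReal_rpow_smul_eq_cpow_mul ht.le _

lemma Iio_subset_integrableExpSet_gammaWeight (ha : 0 < a) :
    Iio 0 ⊆ integrableExpSet id (gammaWeight a) := by
  intro s (hs : s < 0)
  rw [integrableExpSet, mem_ofPred_eq, gammaWeight,
    integrable_withDensity_iff_integrable_smul (by fun_prop)]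
  refine (integrableOn_rpow_mul_exp_neg_mul_rpow (s := a - 1) (p := 1) (b := -s) (by linarith)
    one_pos (by linarith)).congr_fun (fun t (ht : 0 < t) => ?_) measurableSet_Ioi
  rw [NNReal.smul_def, Real.coe_toNNReal _ (Real.rpow_nonneg ht.le _), smul_eq_mul]
  simp

lemma integrableOn_cpow_mul_exp_neg_mul (ha : 0 < a) {z : ℂ} (hz : 0 < z.re) :
    IntegrableOn (fun t : ℝ => (t : ℂ) ^ ((a : ℂ) - 1) * cexp (-(z * t))) (Ioi 0) := by
  have hexp := integrable_cexp_mul_of_re_mem_integrableExpSet (X := id) (μ := gammaWeight a)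
    (z := -z) aemeasurable_id (Iio_subset_integrableExpSet_gammaWeight ha (by simpa using hz))
  rw [gammaWeight, integrable_withDensity_iff_integrable_smul (by fun_prop)] at hexp
  refine IntegrableOn.congr_fun hexp (fun t (ht : 0 < t) => ?_) measurableSet_Ioi
  simp [toNNReal_rpow_smul_eq_cpow_mul ht.le]

lemma differentiableOn_integral_cpow_mul_exp_neg_mul (ha : 0 < a) :
    DifferentiableOn ℂ
      (fun z : ℂ => ∫ t in Ioi (0 : ℝ), (t : ℂ) ^ ((a : ℂ) - 1) * cexp (-(z * t)))
      {z | 0 < z.re} := by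
  have hneg : MapsTo (fun z : ℂ => -z) {z | 0 < z.re}
      {z | z.re ∈ interior (integrableExpSet id (gammaWeight a))} := fun z (hz : 0 < z.re) =>
    interior_mono (Iio_subset_integrableExpSet_gammaWeight ha)
      (by rw [interior_Iio]; simpa using hz)
  refine (differentiableOn_complexMGF.comp (differentiableOn_neg _) hneg).congr fun z _ => ?_
  simp [complexMGF, integral_gammaWeight]

lemma integral_cpow_mul_exp_neg_mul_Ioi_of_re_pos (ha : 0 < a) {z : ℂ} (hz : 0 < z.re) :
    ∫ t in Ioi (0 : ℝ), (t : ℂ) ^ ((a : ℂ) - 1) * cexp (-(z * t)) =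
      Gamma a * z ^ (-(a : ℂ)) := by
  have hopen : IsOpen {z : ℂ | 0 < z.re} := isOpen_lt continuous_const continuous_re
  refine AnalyticOnNhd.eqOn_re_pos_of_eq_ofReal (g := fun w => Gamma a * w ^ (-(a : ℂ)))
    ((differentiableOn_integral_cpow_mul_exp_neg_mul ha).analyticOnNhd hopen)
    (DifferentiableOn.analyticOnNhd (fun w (hw : 0 < w.re) => ?_) hopen) (fun r hr => ?_) hz
  · exact ((differentiableAt_id.cpow_const (Or.inl hw)).const_mul _).differentiableWithinAt
  · rw [integral_cpow_mul_exp_neg_mul_Ioi (by simpa using ha) hr, mul_comm, one_div,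
      inv_cpow _ _ (by simpa [arg_ofReal_of_nonneg hr.le] using Real.pi_ne_zero.symm), cpow_neg]

end Laplace

section Kernel

variable {a b : ℝ}

noncomputable def gammaKernel (a b : ℝ) : ℝ → ℂ :=
  (Ioi 0).indicator fun t => (t : ℂ) ^ ((a : ℂ) - 1) * cexp (-(b * t))

lemma integrable_gammaKernel (ha : 0 < a) (hb : 0 < b) : Integrable (gammaKernel a b) :=
  (integrable_indicator_iff measurableSet_Ioi).mpr
    (integrableOn_cpow_mul_exp_neg_mul ha (by simpa using hb))

lemma fourier_gammaKernel (ha : 0 < a) (hb : 0 < b) (ξ : ℝ) :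
    𝓕 (gammaKernel a b) ξ = Gamma a * (b + 2 * π * ξ * I) ^ (-(a : ℂ)) := by
  rw [Real.fourier_real_eq_integral_exp_smul, gammaKernel]
  simp_rw [← indicator_smul_apply (Ioi (0 : ℝ)) fun v : ℝ => cexp (↑(-2 * π * v * ξ) * I)]
  rw [integral_indicator measurableSet_Ioi,
    ← integral_cpow_mul_exp_neg_mul_Ioi_of_re_pos ha (z := b + 2 * π * ξ * I) (by simpa using hb)]
  refine setIntegral_congr_fun measurableSet_Ioi fun t _ => ?_
  rw [smul_eq_mul, mul_left_comm, ← Complex.exp_add]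
  push_cast
  ring_nf

lemma continuousAt_gammaKernel {p : ℝ} (hp : 0 < p) : ContinuousAt (gammaKernel a b) p := by
  have hcont : ContinuousAt (fun t : ℝ => (t : ℂ) ^ ((a : ℂ) - 1) * cexp (-(b * t))) p :=
    (continuousAt_ofReal_cpow_const p _ (Or.inr hp.ne')).mul (by fun_prop)
  exact hcont.congr_of_eventuallyEq <|
    eventuallyEq_of_mem (Ioi_mem_nhds hp) fun t ht => indicator_of_mem ht _

lemma le_norm_ofReal_add_mul_I (hb : 0 < b) (y : ℝ) :
    min b 1 / 2 * (1 + |y|) ≤ ‖(b : ℂ) + y * I‖ := by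
  have hre : b ≤ ‖(b : ℂ) + y * I‖ := by
    simpa [abs_of_pos hb] using abs_re_le_norm ((b : ℂ) + y * I)
  have him : |y| ≤ ‖(b : ℂ) + y * I‖ := by simpa using abs_im_le_norm ((b : ℂ) + y * I)
  nlinarith [min_le_left b 1, min_le_right b 1, abs_nonneg y]

lemma integrable_ofReal_add_mul_I_cpow_neg (ha : 1 < a) (hb : 0 < b) :
    Integrable fun y : ℝ => ((b : ℂ) + y * I) ^ (-(a : ℂ)) := by
  have hc : 0 < min b 1 / 2 := by positivity
  refine ((integrable_one_add_norm (E := ℝ) (r := a) (by simpa using ha)).const_mul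
    ((min b 1 / 2) ^ (-a))).mono' ?_ (ae_of_all _ fun y => ?_)
  · refine Continuous.aestronglyMeasurable (continuous_iff_continuousAt.mpr fun y => ?_)
    exact (continuousAt_cpow_const (mem_slitPlane_iff.mpr (Or.inl (by simpa using hb)))).comp
      (by fun_prop)
  · rw [← ofReal_neg, norm_cpow_real, Real.norm_eq_abs, ← Real.mul_rpow hc.le (by positivity)]
    exact Real.rpow_le_rpow_of_nonpos (by positivity) (le_norm_ofReal_add_mul_I hb y)
      (by linarith)

lemma integrable_fourier_gammaKernel (ha : 1 < a) (hb : 0 < b) :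
    Integrable (𝓕 (gammaKernel a b)) := by
  rw [funext (fourier_gammaKernel (by linarith) hb)]
  have hscaled := (integrable_ofReal_add_mul_I_cpow_neg ha hb).comp_mul_left' (R := 2 * π)
    (by positivity)
  refine (hscaled.const_mul (Gamma a)).congr (ae_of_all _ fun ξ => ?_)
  push_cast
  ring_nf

lemma integral_cpow_neg_mul_exp_mul_I {p : ℝ} (ha : 1 < a) (hb : 0 < b) (hp : 0 < p) :
    ∫ ξ : ℝ, ((b : ℂ) + 2 * π * ξ * I) ^ (-(a : ℂ)) * cexp (2 * π * ξ * p * I) =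
      (p : ℂ) ^ ((a : ℂ) - 1) * cexp (-(b * p)) / Gamma a := by
  have hinv := (integrable_gammaKernel (by linarith) hb).fourierInv_fourier_eq
    (integrable_fourier_gammaKernel ha hb) (continuousAt_gammaKernel hp)
  have hΓ : Gamma a ≠ 0 := by
    rw [Gamma_ofReal]
    exact_mod_cast (Real.Gamma_pos_of_pos (by linarith)).ne'
  simp_rw [Real.fourierInv_eq', fourier_gammaKernel (by linarith : 0 < a) hb] at hinv
  rw [gammaKernel, indicator_of_mem (mem_Ioi.mpr hp)] at hinv
  rw [eq_div_iff hΓ, ← hinv, ← integral_mul_const]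
  refine integral_congr_ae (ae_of_all _ fun ξ => ?_)
  simp only [smul_eq_mul, RCLike.inner_apply, conj_trivial]
  push_cast
  ring_nf

end Kernel

theorem stmt7 (β p ν : ℝ) (hβ : 0 < β) (hp : 0 < p) (hν : 1 < ν) :
    ∫ x : ℝ, ((β : ℂ) - Complex.I * x) ^ (-(ν : ℂ)) * Complex.exp (-(Complex.I * p * x)) =
      2 * Real.pi * (p : ℂ) ^ ((ν : ℂ) - 1) * Complex.exp (-(β * p : ℝ)) /
        Complex.Gamma ν := by
  have hsubst := Measure.integral_comp_mul_left
    (fun x : ℝ => ((β : ℂ) - I * x) ^ (-(ν : ℂ)) * cexp (-(I * p * x))) (-(2 * π))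
  rw [abs_inv, abs_neg, abs_of_pos Real.two_pi_pos, eq_inv_smul_iff₀ Real.two_pi_pos.ne']
    at hsubst
  rw [← hsubst, real_smul]
  calc (2 * π : ℝ) * ∫ ξ : ℝ, ((β : ℂ) - I * ↑(-(2 * π) * ξ)) ^ (-(ν : ℂ)) *
        cexp (-(I * p * ↑(-(2 * π) * ξ)))
      = 2 * π * ∫ ξ : ℝ, ((β : ℂ) + 2 * π * ξ * I) ^ (-(ν : ℂ)) * cexp (2 * π * ξ * p * I) := by
        push_cast
        congr 1
        refine integral_congr_ae (ae_of_all _ fun ξ => ?_)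
        ring_nf
    _ = _ := by
        rw [integral_cpow_neg_mul_exp_mul_I hν hβ hp]
        push_cast
        ring
end
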